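/- arXiv:2208.08928 — 4 statements merged into one kernel-verified Lean document; each statement's English description precedes it below -/
import Mathlib

section
/- For every E with 0 ≤ E < E*, every w ∈ W⁺ with w ≠ 0 and ‖w‖ = r* satisfies R^E(w) ≥ q·(E* − E)/(S^q·(r*)^q) > 0; in particular, the infimum of R^E over the sphere {w ∈ W⁺ : ‖w‖ = r*} is bounded below by the positive constant q·(E* − E)/(S^q·(r*)^q). -/
/-- On the sphere of radius `r* = ((1-C₁ε)/(γC₂))^(1/(γ-2))` in `W⁺`, the energy-level
Rayleigh quotient `R^E` is bounded below by the positive constant `q(E*-E)/(S^q (r*)^q)`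
for every `0 ≤ E < E* = f(r*)`. -/
theorem rayleigh_pos_on_sphere
    {W : Type*} [NormedAddCommGroup W] [NormedSpace ℝ W]
    (q γ C₁ C₂ S ε : ℝ)
    (hq1 : 1 < q) (hq2 : q < 2) (hγ : 2 < γ)
    (hC₁ : 0 < C₁) (hC₂ : 0 < C₂) (hS : 0 < S)
    (hε : 0 < ε) (hε' : ε < 1 / C₁)
    (Wplus : Set W) (H G Q : W → ℝ)
    (hH : ∀ w ∈ Wplus, H w = ‖w‖ ^ 2)
    (hG : ∀ w ∈ Wplus, G w ≤ ε * C₁ / 2 * ‖w‖ ^ 2 + C₂ * ‖w‖ ^ γ)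
    (hQpos : ∀ w ∈ Wplus, w ≠ 0 → 0 < Q w)
    (hQle : ∀ w ∈ Wplus, w ≠ 0 → Q w ≤ S ^ q * ‖w‖ ^ q)
    (rstar Estar : ℝ)
    (hrstar : rstar = ((1 - C₁ * ε) / (γ * C₂)) ^ (1 / (γ - 2)))
    (hEstar : Estar = (1 - C₁ * ε) / 2 * rstar ^ 2 - C₂ * rstar ^ γ) :
    ∀ E : ℝ, 0 ≤ E → E < Estar →
      (∀ w ∈ Wplus, w ≠ 0 → ‖w‖ = rstar →
        q * (Estar - E) / (S ^ q * rstar ^ q) ≤ (H w / 2 - G w - E) / (Q w / q)) ∧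
      0 < q * (Estar - E) / (S ^ q * rstar ^ q) := by
  intro E hE0 hE
  have hq0 : (0:ℝ) < q := by linarith
  have hbase : 0 < (1 - C₁ * ε) / (γ * C₂) := by
    have h1 : 0 < 1 - C₁ * ε := by
      have := (lt_div_iff₀ hC₁).mp hε'
      linarith [mul_comm ε C₁]
    have h2 : 0 < γ * C₂ := by positivity
    positivity
  have hr0 : 0 < rstar := by
    rw [hrstar]; exact Real.rpow_pos_of_pos hbase _
  have hSq : 0 < S ^ q := Real.rpow_pos_of_pos hS q
  have hrq : 0 < rstar ^ q := Real.rpow_pos_of_pos hr0 q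
  have hden : 0 < S ^ q * rstar ^ q := by positivity
  have hpos : 0 < q * (Estar - E) / (S ^ q * rstar ^ q) := by
    apply div_pos _ hden
    have : 0 < Estar - E := by linarith
    positivity
  refine ⟨?_, hpos⟩
  intro w hw hw0 hwr
  have hQp := hQpos w hw hw0
  have hQl := hQle w hw hw0
  have hnum : Estar - E ≤ H w / 2 - G w - E := by
    have hGw := hG w hw
    rw [hH w hw, hwr] at *
    rw [hwr] at hGw
    rw [hEstar]
    linarith
  have hQl' : Q w ≤ S ^ q * rstar ^ q := by rw [← hwr]; exact hQl
  have heq : q * (Estar - E) / (S ^ q * rstar ^ q)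
      = (Estar - E) / (S ^ q * rstar ^ q / q) := by
    field_simp
  rw [heq]
  apply div_le_div₀ (by linarith) hnum (by positivity)
  gcongr
end

section
/- For every ε > 0 there exists T > 0 such that for all t ≥ T and all v ∈ L^α(μ) with ‖v‖_{L^α} ≤ r, one has |t^{−α}·∫_Ω c·|t·u + v|^α dμ − ∫_Ω c·|u|^α dμ| ≤ ε; i.e., t^{−α}·∫_Ω c·|t·u + v|^α dμ converges to ∫_Ω c·|u|^α dμ as t → +∞, uniformly for v in the closed L^α-ball of radius r. -/
open MeasureTheory
open scoped ENNReal NNReal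

/-- `t^{-α}·∫ c·|t·u + v|^α dμ → ∫ c·|u|^α dμ` as `t → +∞`, uniformly for `v` in the closed
`L^α`-ball of radius `r`. -/
theorem uniform_convergence_weighted_Lalpha
    {Ω : Type*} [MeasurableSpace Ω] (μ : Measure Ω) [IsFiniteMeasure μ]
    (α : ℝ) (hα : 1 ≤ α)
    (c : Ω → ℝ) (hc_meas : Measurable c)
    (hc_bdd : ∃ M : ℝ, ∀ᵐ x ∂μ, |c x| ≤ M)
    (hc_nonneg : ∀ x, 0 ≤ c x)
    (u : Lp ℝ (ENNReal.ofReal α) μ) (r : ℝ) (hr : 0 < r) :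
    ∀ ε > 0, ∃ T > 0, ∀ t : ℝ, T ≤ t →
      ∀ v : Lp ℝ (ENNReal.ofReal α) μ, ‖v‖ ≤ r →
        |t ^ (-α) * (∫ x, c x * |t * u x + v x| ^ α ∂μ) - ∫ x, c x * |u x| ^ α ∂μ| ≤ ε := by
  classical
  obtain ⟨M, hM⟩ := hc_bdd
  intro ε hε
  have hα0 : (0:ℝ) < α := lt_of_lt_of_le one_pos hα
  have hp0 : (ENNReal.ofReal α) ≠ 0 := by
    simp [ENNReal.ofReal_eq_zero, not_le, hα0]
  have hptop : (ENNReal.ofReal α) ≠ ∞ := ENNReal.ofReal_ne_top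
  have hpα : (ENNReal.ofReal α).toReal = α := ENNReal.toReal_ofReal hα0.le
  have hp1 : 1 ≤ (ENNReal.ofReal α) := ENNReal.one_le_ofReal.2 hα
  haveI : Fact (1 ≤ (ENNReal.ofReal α)) := ⟨hp1⟩
  set M' : ℝ := max M 0 with hM'_def
  have hM'0 : (0:ℝ) ≤ M' := le_max_right _ _
  have hcM : ∀ᵐ x ∂μ, c x ≤ M' :=
    hM.mono fun x hx => ((le_abs_self _).trans hx).trans (le_max_left _ _)
  set cnn : Ω → ℝ≥0 := fun x => Real.toNNReal (c x) with hcnn_def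
  have hcnn_meas : Measurable cnn := hc_meas.real_toNNReal
  set ν : Measure Ω := μ.withDensity (fun x => (cnn x : ℝ≥0∞)) with hν_def
  have hν_le : ν ≤ (ENNReal.ofReal M') • μ := by
    rw [hν_def, ← withDensity_const]
    refine withDensity_mono (hcM.mono fun x hx => ?_)
    simpa [hcnn_def, ENNReal.ofReal] using ENNReal.coe_le_coe.2 (Real.toNNReal_le_toNNReal hx)
  have hMne : (ENNReal.ofReal M') ≠ ∞ := ENNReal.ofReal_ne_top
  -- membership in Lp with respect to ν
  have hmem : ∀ f : Ω → ℝ, MemLp f (ENNReal.ofReal α) μ → MemLp f (ENNReal.ofReal α) ν := fun f hf =>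
    MemLp.of_measure_le_smul hMne hν_le hf
  -- key identity: weighted integral is a power of the ν-norm
  have key : ∀ f : Ω → ℝ, MemLp f (ENNReal.ofReal α) μ →
      ∫ x, c x * |f x| ^ α ∂μ = (eLpNorm f (ENNReal.ofReal α) ν).toReal ^ α := by
    intro f hf
    have hfν : MemLp f (ENNReal.ofReal α) ν := hmem f hf
    have h1 : ∫ x, |f x| ^ α ∂ν = ∫ x, c x * |f x| ^ α ∂μ := by
      rw [hν_def, integral_withDensity_eq_integral_smul hcnn_meas]
      refine integral_congr_ae (Filter.Eventually.of_forall fun x => ?_)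
      simp [hcnn_def, NNReal.smul_def, Real.coe_toNNReal _ (hc_nonneg x)]
    have h2 := hfν.eLpNorm_eq_integral_rpow_norm hp0 hptop
    have hint_nonneg : (0:ℝ) ≤ ∫ x, ‖f x‖ ^ (ENNReal.ofReal α).toReal ∂ν :=
      integral_nonneg fun x => Real.rpow_nonneg (norm_nonneg _) _
    have h3 : (eLpNorm f (ENNReal.ofReal α) ν).toReal = (∫ x, ‖f x‖ ^ (ENNReal.ofReal α).toReal ∂ν) ^ (ENNReal.ofReal α).toReal⁻¹ := by
      rw [h2, ENNReal.toReal_ofReal (Real.rpow_nonneg hint_nonneg _)]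
    rw [hpα] at hint_nonneg h3
    rw [h3, Real.rpow_inv_rpow hint_nonneg hα0.ne']
    rw [← h1]
    refine integral_congr_ae (Filter.Eventually.of_forall fun x => ?_)
    simp [Real.norm_eq_abs]
  -- norm bound: ν-seminorm controlled by μ-norm
  set K : ℝ := M' ^ (α⁻¹) with hK_def
  have hK0 : (0:ℝ) ≤ K := Real.rpow_nonneg hM'0 _
  have hNbound : ∀ w : Lp ℝ (ENNReal.ofReal α) μ, (eLpNorm (w : Ω → ℝ) (ENNReal.ofReal α) ν).toReal ≤ K * ‖w‖ := by
    intro w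
    have h1 : eLpNorm (w : Ω → ℝ) (ENNReal.ofReal α) ν ≤ eLpNorm (w : Ω → ℝ) (ENNReal.ofReal α) ((ENNReal.ofReal M') • μ) :=
      eLpNorm_mono_measure _ hν_le
    have h2 : eLpNorm (w : Ω → ℝ) (ENNReal.ofReal α) ((ENNReal.ofReal M') • μ)
        = (ENNReal.ofReal M') ^ ((1:ℝ≥0∞)/(ENNReal.ofReal α)).toReal * eLpNorm (w : Ω → ℝ) (ENNReal.ofReal α) μ := by
      rw [eLpNorm_smul_measure_of_ne_top hptop]; rfl
    have h3 : ((1:ℝ≥0∞)/(ENNReal.ofReal α)).toReal = α⁻¹ := by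
      rw [one_div, ENNReal.toReal_inv, hpα]
    have hfin : (ENNReal.ofReal M') ^ ((1:ℝ≥0∞)/(ENNReal.ofReal α)).toReal * eLpNorm (w : Ω → ℝ) (ENNReal.ofReal α) μ ≠ ∞ := by
      refine ENNReal.mul_ne_top ?_ (Lp.eLpNorm_ne_top w)
      exact ENNReal.rpow_ne_top_of_nonneg (by rw [h3]; positivity) hMne
    calc (eLpNorm (w : Ω → ℝ) (ENNReal.ofReal α) ν).toReal
        ≤ ((ENNReal.ofReal M') ^ ((1:ℝ≥0∞)/(ENNReal.ofReal α)).toReal * eLpNorm (w : Ω → ℝ) (ENNReal.ofReal α) μ).toReal :=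
          ENNReal.toReal_mono hfin (h1.trans_eq h2)
      _ = K * ‖w‖ := by
          rw [ENNReal.toReal_mul, ← ENNReal.toReal_rpow, ENNReal.toReal_ofReal hM'0, h3,
            Lp.norm_def]
  -- triangle-type estimate
  have hNdiff : ∀ w : Lp ℝ (ENNReal.ofReal α) μ,
      |(eLpNorm ((u + w : Lp ℝ (ENNReal.ofReal α) μ) : Ω → ℝ) (ENNReal.ofReal α) ν).toReal - (eLpNorm (u : Ω → ℝ) (ENNReal.ofReal α) ν).toReal|
        ≤ K * ‖w‖ := by
    intro w
    have hac : ν ≪ μ := withDensity_absolutelyContinuous μ _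
    have huν : MemLp (u : Ω → ℝ) (ENNReal.ofReal α) ν := hmem _ (Lp.memLp u)
    have hwν : MemLp (w : Ω → ℝ) (ENNReal.ofReal α) ν := hmem _ (Lp.memLp w)
    have hadd : eLpNorm ((u + w : Lp ℝ (ENNReal.ofReal α) μ) : Ω → ℝ) (ENNReal.ofReal α) ν
        = eLpNorm ((u : Ω → ℝ) + (w : Ω → ℝ)) (ENNReal.ofReal α) ν :=
      eLpNorm_congr_ae (hac.ae_eq (Lp.coeFn_add u w))
    have h1 : eLpNorm ((u : Ω → ℝ) + (w : Ω → ℝ)) (ENNReal.ofReal α) ν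
        ≤ eLpNorm (u : Ω → ℝ) (ENNReal.ofReal α) ν + eLpNorm (w : Ω → ℝ) (ENNReal.ofReal α) ν :=
      eLpNorm_add_le huν.aestronglyMeasurable hwν.aestronglyMeasurable hp1
    have h2 : eLpNorm (u : Ω → ℝ) (ENNReal.ofReal α) ν
        ≤ eLpNorm ((u : Ω → ℝ) + (w : Ω → ℝ)) (ENNReal.ofReal α) ν + eLpNorm (w : Ω → ℝ) (ENNReal.ofReal α) ν := by
      have : eLpNorm (u : Ω → ℝ) (ENNReal.ofReal α) ν
          = eLpNorm (((u : Ω → ℝ) + (w : Ω → ℝ)) + (-(w : Ω → ℝ))) (ENNReal.ofReal α) ν := by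
        refine eLpNorm_congr_ae (Filter.Eventually.of_forall fun x => ?_)
        simp
      rw [this]
      calc eLpNorm (((u : Ω → ℝ) + (w : Ω → ℝ)) + (-(w : Ω → ℝ))) (ENNReal.ofReal α) ν
          ≤ eLpNorm ((u : Ω → ℝ) + (w : Ω → ℝ)) (ENNReal.ofReal α) ν + eLpNorm (-(w : Ω → ℝ)) (ENNReal.ofReal α) ν :=
            eLpNorm_add_le (huν.aestronglyMeasurable.add hwν.aestronglyMeasurable)
              hwν.aestronglyMeasurable.neg hp1
        _ = eLpNorm ((u : Ω → ℝ) + (w : Ω → ℝ)) (ENNReal.ofReal α) ν + eLpNorm (w : Ω → ℝ) (ENNReal.ofReal α) ν := by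
            rw [eLpNorm_neg]
    have hune : eLpNorm (u : Ω → ℝ) (ENNReal.ofReal α) ν ≠ ∞ := huν.2.ne
    have hwne : eLpNorm (w : Ω → ℝ) (ENNReal.ofReal α) ν ≠ ∞ := hwν.2.ne
    have hsne : eLpNorm ((u : Ω → ℝ) + (w : Ω → ℝ)) (ENNReal.ofReal α) ν ≠ ∞ :=
      (h1.trans_lt (ENNReal.add_lt_top.2 ⟨huν.2, hwν.2⟩)).ne
    rw [hadd, abs_sub_le_iff]
    constructor
    · have := ENNReal.toReal_mono (ENNReal.add_ne_top.2 ⟨hune, hwne⟩) h1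
      rw [ENNReal.toReal_add hune hwne] at this
      have hb := hNbound w
      linarith
    · have := ENNReal.toReal_mono (ENNReal.add_ne_top.2 ⟨hsne, hwne⟩) h2
      rw [ENNReal.toReal_add hsne hwne] at this
      have hb := hNbound w
      linarith
  -- continuity of s ↦ s ^ α at the limit point
  set A : ℝ := (eLpNorm (u : Ω → ℝ) (ENNReal.ofReal α) ν).toReal with hA_def
  have hcont : ContinuousAt (fun s : ℝ => s ^ α) A :=
    Real.continuousAt_rpow_const _ _ (Or.inr hα0.le)
  obtain ⟨δ, hδ0, hδ⟩ := Metric.continuousAt_iff.1 hcont ε hε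
  refine ⟨max 1 (K * r / δ + 1), lt_of_lt_of_le one_pos (le_max_left _ _), ?_⟩
  intro t ht v hv
  have ht1 : (1:ℝ) ≤ t := (le_max_left _ _).trans ht
  have ht0 : (0:ℝ) < t := lt_of_lt_of_le one_pos ht1
  have htK : K * r / t < δ := by
    have h1 : K * r / δ + 1 ≤ t := (le_max_right _ _).trans ht
    have h2 : K * r / δ < t := by linarith
    have h3 := (div_lt_iff₀ hδ0).1 h2
    rw [div_lt_iff₀ ht0]
    nlinarith
  set w : Lp ℝ (ENNReal.ofReal α) μ := t⁻¹ • v with hw_def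
  have hwnorm : ‖w‖ ≤ r / t := by
    rw [hw_def, norm_smul, norm_inv, Real.norm_eq_abs, abs_of_pos ht0, div_eq_inv_mul]
    exact mul_le_mul_of_nonneg_left hv (inv_nonneg.2 ht0.le)
  -- rewrite the scaled integral
  have hstep1 : t ^ (-α) * (∫ x, c x * |t * u x + v x| ^ α ∂μ)
      = ∫ x, c x * |u x + t⁻¹ * v x| ^ α ∂μ := by
    rw [← integral_const_mul]
    refine integral_congr_ae (Filter.Eventually.of_forall fun x => ?_)
    have e1 : |(u : Ω → ℝ) x + t⁻¹ * (v : Ω → ℝ) x| = t⁻¹ * |t * (u : Ω → ℝ) x + (v : Ω → ℝ) x| := by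
      have h0 : (u : Ω → ℝ) x + t⁻¹ * (v : Ω → ℝ) x = t⁻¹ * (t * (u : Ω → ℝ) x + (v : Ω → ℝ) x) := by
        field_simp
      rw [h0, abs_mul, abs_of_pos (inv_pos.2 ht0)]
    have e2 : (t⁻¹ * |t * (u : Ω → ℝ) x + (v : Ω → ℝ) x|) ^ α
        = t⁻¹ ^ α * |t * (u : Ω → ℝ) x + (v : Ω → ℝ) x| ^ α :=
      Real.mul_rpow (inv_nonneg.2 ht0.le) (abs_nonneg _)
    have e3 : t⁻¹ ^ α = t ^ (-α) := by
      rw [Real.rpow_neg ht0.le]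
      exact Real.inv_rpow ht0.le α
    dsimp only
    rw [e1, e2, e3]
    ring
  have hstep2 : ∫ x, c x * |u x + t⁻¹ * v x| ^ α ∂μ
      = ∫ x, c x * |((u + w : Lp ℝ (ENNReal.ofReal α) μ)) x| ^ α ∂μ := by
    refine integral_congr_ae ?_
    filter_upwards [Lp.coeFn_add u w, Lp.coeFn_smul t⁻¹ v] with x h1 h2
    rw [h1, Pi.add_apply, h2, Pi.smul_apply, smul_eq_mul]
  rw [hstep1, hstep2, key _ (Lp.memLp (u + w)), key _ (Lp.memLp u)]
  have hclose : |(eLpNorm ((u + w : Lp ℝ (ENNReal.ofReal α) μ) : Ω → ℝ) (ENNReal.ofReal α) ν).toReal - A| < δ := by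
    refine lt_of_le_of_lt ((hNdiff w).trans ?_) htK
    calc K * ‖w‖ ≤ K * (r / t) := mul_le_mul_of_nonneg_left hwnorm hK0
      _ = K * r / t := by ring
  have := hδ (show dist ((eLpNorm ((u + w : Lp ℝ (ENNReal.ofReal α) μ) : Ω → ℝ) (ENNReal.ofReal α) ν).toReal) A < δ by
    rwa [Real.dist_eq])
  rw [Real.dist_eq] at this
  exact this.le
end

section
/- sup over v in the closed ball {v ∈ W : ‖v‖ ≤ r} of R^E(t·u + v) tends to −∞ as t → +∞; i.e., R^E(t·u + v) → −∞ as t → +∞ uniformly for v with ‖v‖ ≤ r. -/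
open MeasureTheory


lemma aux_abs_rpow_le (α : ℝ) (hα : 1 ≤ α) (a b : ℝ) :
    |a| ^ α ≤ 2 ^ (α - 1) * (|a + b| ^ α + |b| ^ α) := by
  have h1 : |a| ≤ |a + b| + |b| := by
    calc |a| = |(a + b) + (-b)| := by ring_nf
    _ ≤ |a + b| + |(-b)| := abs_add_le _ _
    _ = |a + b| + |b| := by rw [abs_neg]
  have h2 : |a| ^ α ≤ (|a + b| + |b|) ^ α :=
    Real.rpow_le_rpow (abs_nonneg a) h1 (by linarith)
  refine h2.trans ?_
  have := NNReal.rpow_add_le_mul_rpow_add_rpow ‖a + b‖₊ ‖b‖₊ hα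
  have h3 := NNReal.coe_le_coe.2 this
  push_cast at h3
  simpa [Real.norm_eq_abs] using h3

lemma aux_integral_abs_rpow {Ω : Type*} [MeasurableSpace Ω] (μ : Measure Ω)
    (α : ℝ) (hα : 0 < α) [Fact (1 ≤ ENNReal.ofReal α)]
    (f : Lp ℝ (ENNReal.ofReal α) μ) :
    ∫ x, |f x| ^ α ∂μ = ‖f‖ ^ α := by
  have hp0 : ENNReal.ofReal α ≠ 0 := by simp [ENNReal.ofReal_eq_zero]; linarith
  have hptop : ENNReal.ofReal α ≠ ⊤ := ENNReal.ofReal_ne_top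
  have h := (Lp.memLp f).eLpNorm_eq_integral_rpow_norm hp0 hptop
  have hint_nonneg : 0 ≤ ∫ x, |f x| ^ α ∂μ :=
    integral_nonneg fun x => by positivity
  rw [Lp.norm_def, h, ENNReal.toReal_ofReal (by positivity),
    ENNReal.toReal_ofReal hα.le]
  simp only [Real.norm_eq_abs]
  rw [← Real.rpow_mul hint_nonneg, inv_mul_cancel₀ hα.ne', Real.rpow_one]

-- integrability of c * |f|^α
lemma aux_integrable {Ω : Type*} [MeasurableSpace Ω] (μ : Measure Ω)
    (α : ℝ) (hα : 1 ≤ α) [Fact (1 ≤ ENNReal.ofReal α)]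
    (c : Ω → ℝ) (hc_meas : Measurable c) (Mc : ℝ) (hMc : ∀ᵐ x ∂μ, |c x| ≤ Mc)
    (f : Lp ℝ (ENNReal.ofReal α) μ) :
    Integrable (fun x => c x * |f x| ^ α) μ := by
  have hα0 : (0:ℝ) < α := by linarith
  have hp0 : ENNReal.ofReal α ≠ 0 := by simp [ENNReal.ofReal_eq_zero]; linarith
  have hg : Integrable (fun x => |f x| ^ α) μ := by
    have := (Lp.memLp f).integrable_norm_rpow hp0 ENNReal.ofReal_ne_top
    simpa [Real.norm_eq_abs, ENNReal.toReal_ofReal hα0.le] using this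
  exact hg.bdd_mul (hc_meas.aestronglyMeasurable)
    (by filter_upwards [hMc] with x hx; simpa [Real.norm_eq_abs] using hx)

lemma aux_lower {Ω : Type*} [MeasurableSpace Ω] (μ : Measure Ω)
    (α : ℝ) (hα : 1 ≤ α) [Fact (1 ≤ ENNReal.ofReal α)]
    (c : Ω → ℝ) (hc_meas : Measurable c) (hc_nonneg : ∀ x, 0 ≤ c x)
    (Mc : ℝ) (hMc : ∀ᵐ x ∂μ, |c x| ≤ Mc)
    (f g : Lp ℝ (ENNReal.ofReal α) μ) (t : ℝ) (ht : 0 ≤ t) :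
    2 ^ (1 - α) * t ^ α * (∫ x, c x * |f x| ^ α ∂μ) - Mc * ‖g‖ ^ α
      ≤ ∫ x, c x * |(t • f + g : Lp ℝ (ENNReal.ofReal α) μ) x| ^ α ∂μ := by
  have hα0 : (0:ℝ) < α := by linarith
  have hp0 : ENNReal.ofReal α ≠ 0 := by simp [ENNReal.ofReal_eq_zero]; linarith
  set w : Lp ℝ (ENNReal.ofReal α) μ := t • f + g with hw
  have Int_w : Integrable (fun x => c x * |w x| ^ α) μ :=
    aux_integrable μ α hα c hc_meas Mc hMc w
  have Int_f : Integrable (fun x => c x * |f x| ^ α) μ :=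
    aux_integrable μ α hα c hc_meas Mc hMc f
  have Int_g : Integrable (fun x => c x * |g x| ^ α) μ :=
    aux_integrable μ α hα c hc_meas Mc hMc g
  have Int_g' : Integrable (fun x => |g x| ^ α) μ := by
    have := (Lp.memLp g).integrable_norm_rpow hp0 ENNReal.ofReal_ne_top
    simpa [Real.norm_eq_abs, ENNReal.toReal_ofReal hα0.le] using this
  have h_ae : ∀ᵐ x ∂μ, w x = t * f x + g x := by
    filter_upwards [Lp.coeFn_add (t • f) g, Lp.coeFn_smul t f] with x h1 h2
    rw [hw, h1, Pi.add_apply, h2, Pi.smul_apply, smul_eq_mul]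
  have h2pow : (2:ℝ) ^ (1 - α) * 2 ^ (α - 1) = 1 := by
    rw [← Real.rpow_add two_pos]; norm_num
  have hpt : ∀ᵐ x ∂μ,
      2 ^ (1 - α) * t ^ α * (c x * |f x| ^ α) - c x * |g x| ^ α ≤ c x * |w x| ^ α := by
    filter_upwards [h_ae] with x hx
    rw [hx]
    have key := aux_abs_rpow_le α hα (t * f x) (g x)
    have habs : |t * f x| ^ α = t ^ α * |f x| ^ α := by
      rw [abs_mul, Real.mul_rpow (abs_nonneg t) (abs_nonneg (f x)), abs_of_nonneg ht]
    rw [habs] at key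
    have hc := hc_nonneg x
    have h3 := mul_le_mul_of_nonneg_left key hc
    have h4 := mul_le_mul_of_nonneg_left h3
      (le_of_lt (Real.rpow_pos_of_pos two_pos (1 - α)))
    have h5 : 2 ^ (1 - α) * (c x * (t ^ α * |f x| ^ α))
        ≤ c x * (|t * f x + g x| ^ α + |g x| ^ α) := by
      refine h4.trans_eq ?_
      calc 2 ^ (1 - α) * (c x * (2 ^ (α - 1) * (|t * f x + g x| ^ α + |g x| ^ α)))
          = (2 ^ (1 - α) * 2 ^ (α - 1)) * (c x * (|t * f x + g x| ^ α + |g x| ^ α)) := by ring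
        _ = c x * (|t * f x + g x| ^ α + |g x| ^ α) := by rw [h2pow]; ring
    ring_nf at h5 ⊢
    linarith
  have LHSint : Integrable
      (fun x => 2 ^ (1 - α) * t ^ α * (c x * |f x| ^ α) - c x * |g x| ^ α) μ :=
    (Int_f.const_mul _).sub Int_g
  have hmono := integral_mono_ae LHSint Int_w hpt
  have heq : (∫ x, (2 ^ (1 - α) * t ^ α * (c x * |f x| ^ α) - c x * |g x| ^ α) ∂μ)
      = 2 ^ (1 - α) * t ^ α * (∫ x, c x * |f x| ^ α ∂μ) - ∫ x, c x * |g x| ^ α ∂μ := by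
    rw [integral_sub (Int_f.const_mul _) Int_g, integral_const_mul]
  have hgbound : (∫ x, c x * |g x| ^ α ∂μ) ≤ Mc * ‖g‖ ^ α := by
    have h5 : (∫ x, c x * |g x| ^ α ∂μ) ≤ ∫ x, Mc * |g x| ^ α ∂μ := by
      refine integral_mono_ae Int_g (Int_g'.const_mul Mc) ?_
      filter_upwards [hMc] with x hx
      have : 0 ≤ |g x| ^ α := by positivity
      nlinarith [abs_le.mp hx]
    rw [integral_const_mul, aux_integral_abs_rpow μ α hα0 g] at h5
    exact h5
  rw [heq] at hmono
  linarith

set_option maxHeartbeats 1000000 in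
/-- The energy-level Rayleigh quotient `R^E(t·u + v)` tends to `−∞` as `t → +∞`, uniformly
for `v` in the closed ball of radius `r`. -/
theorem rayleigh_tendsto_neg_infty_uniformly
    {W : Type*} [NormedAddCommGroup W] [NormedSpace ℝ W]
    {Ω : Type*} [MeasurableSpace Ω] (μ : Measure Ω) [IsFiniteMeasure μ]
    (α q : ℝ) (hα : 2 < α) (hq1 : 1 ≤ q) (hq2 : q < 2)
    [Fact (1 ≤ ENNReal.ofReal α)] [Fact (1 ≤ ENNReal.ofReal q)]
    (iα : W →L[ℝ] Lp ℝ (ENNReal.ofReal α) μ)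
    (iq : W →L[ℝ] Lp ℝ (ENNReal.ofReal q) μ)
    (c : Ω → ℝ) (hc_meas : Measurable c)
    (hc_bdd : ∃ M : ℝ, ∀ᵐ x ∂μ, |c x| ≤ M)
    (hc_nonneg : ∀ x, 0 ≤ c x)
    (C₀ : ℝ) (G : W → ℝ)
    (hG : ∀ w : W, (∫ x, c x * |iα w x| ^ α ∂μ) - C₀ ≤ G w)
    (E r : ℝ) (hr : 0 < r)
    (u : W) (hu : 0 < ∫ x, c x * |iα u x| ^ α ∂μ) (huq : iq u ≠ 0) :
    ∀ M : ℝ, ∃ T : ℝ, ∀ t : ℝ, T ≤ t → ∀ v : W, ‖v‖ ≤ r →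
      (‖t • u + v‖ ^ 2 / 2 - G (t • u + v) - E) / (‖iq (t • u + v)‖ ^ q / q) ≤ M := by
  intro M
  obtain ⟨Mc₀, hMc₀⟩ := hc_bdd
  set Mc := max Mc₀ 0 with hMcdef
  have hMc : ∀ᵐ x ∂μ, |c x| ≤ Mc := hMc₀.mono fun x hx => hx.trans (le_max_left _ _)
  have hMc0 : 0 ≤ Mc := le_max_right _ _
  have hα1 : (1:ℝ) ≤ α := by linarith
  have hα0 : (0:ℝ) < α := by linarith
  have hq0 : (0:ℝ) < q := by linarith
  have hiqu : 0 < ‖iq u‖ := norm_pos_iff.mpr huq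
  obtain ⟨K, hK⟩ : ∃ x : ℝ, x = (‖iq‖ * (‖u‖ + r)) ^ q := ⟨_, rfl⟩
  have hK0 : 0 ≤ K := hK ▸ Real.rpow_nonneg (by positivity) q
  obtain ⟨A, hA⟩ : ∃ x : ℝ, x = (‖u‖ + r) ^ 2 / 2 + |M| * K / q := ⟨_, rfl⟩
  obtain ⟨B, hB⟩ : ∃ x : ℝ, x = 2 ^ (1 - α) * (∫ x, c x * |iα u x| ^ α ∂μ) := ⟨_, rfl⟩
  have hB0 : 0 < B := hB ▸ mul_pos (Real.rpow_pos_of_pos two_pos _) hu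
  obtain ⟨C₁, hC₁⟩ : ∃ x : ℝ, x = Mc * (‖iα‖ * r) ^ α + C₀ - E := ⟨_, rfl⟩
  have hev3 : ∀ᶠ t : ℝ in Filter.atTop, A + |C₁| ≤ B * t ^ (α - 2) := by
    have h := (tendsto_rpow_atTop (by linarith : (0:ℝ) < α - 2)).const_mul_atTop hB0
    exact h.eventually_ge_atTop _
  obtain ⟨T, hT⟩ := Filter.eventually_atTop.mp
    (((Filter.eventually_ge_atTop (1:ℝ)).and
      (Filter.eventually_gt_atTop (‖iq‖ * r / ‖iq u‖))).and hev3)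
  refine ⟨T, fun t ht v hv => ?_⟩
  obtain ⟨⟨ht1, ht2⟩, ht3⟩ := hT t ht
  have ht0 : (0:ℝ) < t := lt_of_lt_of_le one_pos ht1
  set w := t • u + v with hwdef
  -- denominator bounds
  have hiqw_eq : iq w = t • iq u + iq v := by rw [hwdef, map_add, ContinuousLinearMap.map_smul]
  have hiqv : ‖iq v‖ ≤ ‖iq‖ * r :=
    (iq.le_opNorm v).trans (mul_le_mul_of_nonneg_left hv (norm_nonneg _))
  have hlow : t * ‖iq u‖ - ‖iq‖ * r ≤ ‖iq w‖ := by
    have h1 : ‖t • iq u‖ ≤ ‖iq w‖ + ‖iq v‖ := by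
      rw [hiqw_eq]
      calc ‖t • iq u‖ = ‖(t • iq u + iq v) - iq v‖ := by rw [add_sub_cancel_right]
        _ ≤ ‖t • iq u + iq v‖ + ‖iq v‖ := norm_sub_le _ _
    rw [norm_smul, Real.norm_eq_abs, abs_of_pos ht0] at h1
    linarith
  have hposn : 0 < t * ‖iq u‖ - ‖iq‖ * r := by
    rw [div_lt_iff₀ hiqu] at ht2; linarith
  have hiqw_pos : 0 < ‖iq w‖ := lt_of_lt_of_le hposn hlow
  have hden_pos : 0 < ‖iq w‖ ^ q / q := div_pos (Real.rpow_pos_of_pos hiqw_pos q) hq0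
  have hwnorm : ‖w‖ ≤ t * (‖u‖ + r) := by
    calc ‖w‖ ≤ ‖t • u‖ + ‖v‖ := norm_add_le _ _
      _ = t * ‖u‖ + ‖v‖ := by rw [norm_smul, Real.norm_eq_abs, abs_of_pos ht0]
      _ ≤ t * (‖u‖ + r) := by nlinarith [norm_nonneg u]
  have ht2eq : t ^ (2:ℝ) = t ^ (2:ℕ) := by
    rw [← Real.rpow_natCast t 2]; norm_num
  have hiqw_up : ‖iq w‖ ^ q ≤ t ^ 2 * K := by
    calc ‖iq w‖ ^ q ≤ (t * (‖iq‖ * (‖u‖ + r))) ^ q := by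
          refine Real.rpow_le_rpow (norm_nonneg _) ?_ hq0.le
          calc ‖iq w‖ ≤ ‖iq‖ * ‖w‖ := iq.le_opNorm w
            _ ≤ ‖iq‖ * (t * (‖u‖ + r)) :=
              mul_le_mul_of_nonneg_left hwnorm (norm_nonneg _)
            _ = t * (‖iq‖ * (‖u‖ + r)) := by ring
      _ = t ^ q * K := by rw [hK]; exact Real.mul_rpow ht0.le (by positivity)
      _ ≤ t ^ (2:ℝ) * K := mul_le_mul_of_nonneg_right
          (Real.rpow_le_rpow_of_exponent_le ht1 hq2.le) hK0
      _ = t ^ 2 * K := by rw [ht2eq]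
  -- numerator bound
  have hkey := aux_lower μ α hα1 c hc_meas hc_nonneg Mc hMc (iα u) (iα v) t ht0.le
  have hiαw : iα w = t • iα u + iα v := by rw [hwdef, map_add, ContinuousLinearMap.map_smul]
  rw [← hiαw] at hkey
  have hiαv : ‖iα v‖ ^ α ≤ (‖iα‖ * r) ^ α :=
    Real.rpow_le_rpow (norm_nonneg _)
      ((iα.le_opNorm v).trans (mul_le_mul_of_nonneg_left hv (norm_nonneg _))) hα0.le
  have hwsq : ‖w‖ ^ 2 ≤ (t * (‖u‖ + r)) ^ 2 :=
    pow_le_pow_left₀ (norm_nonneg w) hwnorm 2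
  have hnum : ‖w‖ ^ 2 / 2 - G w - E ≤ t ^ 2 * ((‖u‖ + r) ^ 2 / 2) - B * t ^ α + C₁ := by
    have hGw := hG w
    have h6 : Mc * ‖iα v‖ ^ α ≤ Mc * (‖iα‖ * r) ^ α :=
      mul_le_mul_of_nonneg_left hiαv hMc0
    have h7 : (t * (‖u‖ + r)) ^ 2 = t ^ 2 * (‖u‖ + r) ^ 2 := by ring
    have hBt : 2 ^ (1 - α) * t ^ α * (∫ x, c x * |iα u x| ^ α ∂μ) = B * t ^ α := by
      rw [hB]; ring
    rw [hBt] at hkey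
    linarith [hkey, hGw, hwsq, h6]
  -- arithmetic: t^α = t^2 * t^(α-2)
  have htα : t ^ α = t ^ 2 * t ^ (α - 2) := by
    rw [← ht2eq, ← Real.rpow_add ht0]; norm_num
  have ht2ge : (1:ℝ) ≤ t ^ 2 := by nlinarith
  have hfinal : t ^ 2 * ((‖u‖ + r) ^ 2 / 2) - B * t ^ α + C₁ + |M| * (t ^ 2 * K / q) ≤ 0 := by
    have hexp : B * t ^ α = t ^ 2 * (B * t ^ (α - 2)) := by rw [htα]; ring
    have h8 : t ^ 2 * ((‖u‖ + r) ^ 2 / 2) + |M| * (t ^ 2 * K / q) - B * t ^ α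
        = t ^ 2 * (A - B * t ^ (α - 2)) := by rw [hexp, hA]; ring
    have h9 : A - B * t ^ (α - 2) ≤ -|C₁| := by linarith
    have h10 : t ^ 2 * (A - B * t ^ (α - 2)) ≤ 1 * (A - B * t ^ (α - 2)) :=
      mul_le_mul_of_nonpos_right ht2ge (by linarith [abs_nonneg C₁])
    rw [one_mul] at h10
    linarith [abs_nonneg C₁, le_abs_self C₁, h8, h9, h10]
  -- conclude
  rw [div_le_iff₀ hden_pos]
  have hden_up : ‖iq w‖ ^ q / q ≤ t ^ 2 * K / q :=
    (div_le_div_iff_of_pos_right hq0).mpr hiqw_up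
  calc ‖w‖ ^ 2 / 2 - G w - E ≤ -( |M| * (t ^ 2 * K / q)) := by linarith
    _ ≤ -( |M| * (‖iq w‖ ^ q / q)) := by
        have := mul_le_mul_of_nonneg_left hden_up (abs_nonneg M); linarith
    _ ≤ M * (‖iq w‖ ^ q / q) := by
        have := mul_le_mul_of_nonneg_right (neg_abs_le M) hden_pos.le
        linarith
end

section
/- One has the inequality (α − q)·R(u) − DR(u)(u) ≥ (q/Q(u))·(((α − 2)/2)·H(u) − α·E), where DR(u)(u) denotes the Fréchet derivative of R at u applied to u. -/
/-- Key estimate in the Cerami condition: for the energy-level Rayleigh quotient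
`R(v) = (H(v)/2 − G(v) − E)/(Q(v)/q)` one has
`(α − q)·R(u) − DR(u)(u) ≥ (q/Q(u))·(((α − 2)/2)·H(u) − α·E)`. -/
theorem rayleigh_derivative_inequality
    {W : Type*} [NormedAddCommGroup W] [NormedSpace ℝ W]
    (q α E : ℝ) (hq1 : 1 < q) (hq2 : q < 2) (hα : 2 < α)
    (H G Q : W → ℝ) (H' G' Q' : W →L[ℝ] ℝ) (u : W) (hu : u ≠ 0)
    (hH : HasFDerivAt H H' u) (hG : HasFDerivAt G G' u) (hQ : HasFDerivAt Q Q' u)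
    (hQu : 0 < Q u)
    (hhomH : H' u = 2 * H u) (hhomQ : Q' u = q * Q u)
    (hAR : α * G u ≤ G' u) :
    ∀ R' : W →L[ℝ] ℝ,
      HasFDerivAt (fun v => (H v / 2 - G v - E) / (Q v / q)) R' u →
        q / Q u * ((α - 2) / 2 * H u - α * E) ≤
          (α - q) * ((H u / 2 - G u - E) / (Q u / q)) - R' u := by
  intro R' hR
  have hq0 : (0:ℝ) < q := lt_trans one_pos hq1
  have hDne : Q u / q ≠ 0 := div_ne_zero (ne_of_gt hQu) (ne_of_gt hq0)
  -- numerator derivative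
  have hN : HasFDerivAt (fun v => H v / 2 - G v - E)
      (((2:ℝ)⁻¹ • H') - G') u := by
    have := ((hH.const_smul (2:ℝ)⁻¹).sub hG).sub_const E
    simpa [div_eq_inv_mul, smul_eq_mul] using this
  -- denominator derivative
  have hD : HasFDerivAt (fun v => Q v / q) ((q⁻¹ : ℝ) • Q') u := by
    have := hQ.const_smul (q⁻¹ : ℝ)
    simpa [div_eq_inv_mul, smul_eq_mul, Pi.smul_def] using this
  -- inverse of denominator
  have hInv : HasFDerivAt (fun v => (Q v / q)⁻¹)
      ((-((Q u / q) ^ 2)⁻¹) • ((q⁻¹ : ℝ) • Q')) u := by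
    have h1 : HasDerivAt (fun t : ℝ => t⁻¹) (-((Q u / q) ^ 2)⁻¹) (Q u / q) :=
      hasDerivAt_inv hDne
    exact h1.comp_hasFDerivAt u hD
  -- quotient derivative
  have hRq : HasFDerivAt (fun v => (H v / 2 - G v - E) / (Q v / q))
      ((H u / 2 - G u - E) • ((-((Q u / q) ^ 2)⁻¹) • ((q⁻¹ : ℝ) • Q')) +
        (Q u / q)⁻¹ • (((2:ℝ)⁻¹ • H') - G')) u := by
    have := hN.mul hInv
    simpa [div_eq_mul_inv, Pi.mul_def] using this
  have hEq := hR.unique hRq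
  have hval : R' u = (H u / 2 - G u - E) * ((-((Q u / q) ^ 2)⁻¹) * (q⁻¹ * Q' u)) +
      (Q u / q)⁻¹ * ((2:ℝ)⁻¹ * H' u - G' u) := by
    rw [hEq]; simp [smul_eq_mul]
  rw [hval, hhomH, hhomQ]
  have hQne : Q u ≠ 0 := ne_of_gt hQu
  have key : (α - q) * ((H u / 2 - G u - E) / (Q u / q)) -
      ((H u / 2 - G u - E) * ((-((Q u / q) ^ 2)⁻¹) * (q⁻¹ * (q * Q u))) +
        (Q u / q)⁻¹ * ((2:ℝ)⁻¹ * (2 * H u) - G' u)) =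
      q / Q u * ((α - 2) / 2 * H u - α * E + (G' u - α * G u)) := by
    field_simp
    ring
  rw [key]
  have h1 : 0 ≤ G' u - α * G u := by linarith
  have h2 : 0 < q / Q u := div_pos hq0 hQu
  nlinarith [mul_le_mul_of_nonneg_left h1 (le_of_lt h2)]
end
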